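/- arXiv:2201.04852 — 3 statements merged into one kernel-verified Lean document; each statement's English description precedes it below -/
import Mathlib

section
/- Let f₄ be a symmetric 4-linear form on ℝⁿ with f₄[x,x,y,y] ≥ 0 for all x, y and f₄[x,x,x,x] > 0 for x ≠ 0. Define d(x)=f₄[x,x,x,x] and Q(x) = (1/2) d(x)^{1/2}. Then for every x ≠ 0 and every h: ∇²Q(x)[h,h] ≥ d(x)^{-1/2} f₄[x,x,h,h], i.e., ∇²Q(x)[h,h] ≥ (1/(12 ‖x‖_f²)) ∇²d(x)[h,h]. -/
/-! By the chain rule, with `∇d(x) = 4 f₄[x,x,x,·]` and `∇²d(x) = 12 f₄[x,x,·,·]` (symmetry of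
`f₄`), the Hessian of `Q = ½ √d` is `3 f₄[x,x,h,h] / √d - 2 f₄[x,x,x,h]² / d^{3/2}`. The form
`f₄[x,x,·,·]` is positive semidefinite, so Cauchy–Schwarz gives
`f₄[x,x,x,h]² ≤ d(x) f₄[x,x,h,h]`, and the subtracted term is at most `2 f₄[x,x,h,h] / √d`. -/

open Function Topology

theorem MultilinearMap.continuous_of_finiteDimensional {𝕜 ι F : Type*} {E : ι → Type*}
    [NontriviallyNormedField 𝕜] [CompleteSpace 𝕜] [Fintype ι]
    [∀ i, NormedAddCommGroup (E i)] [∀ i, NormedSpace 𝕜 (E i)] [∀ i, FiniteDimensional 𝕜 (E i)]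
    [AddCommGroup F] [Module 𝕜 F] [TopologicalSpace F] [IsTopologicalAddGroup F]
    [ContinuousSMul 𝕜 F] (f : MultilinearMap 𝕜 E F) : Continuous f := by
  classical
  let b i := Module.finBasis 𝕜 (E i)
  have hexpand : ⇑f = fun v => ∑ r : ∀ i, Fin (Module.finrank 𝕜 (E i)),
      (∏ i, (b i).coord (r i) (v i)) • f fun i => b i (r i) := by
    funext v
    conv_lhs => rw [← funext fun i => (b i).sum_repr (v i)]
    rw [f.map_sum]
    simp only [f.map_smul_univ, Module.Basis.coord_apply]
  have hcoord (i : ι) (j : Fin (Module.finrank 𝕜 (E i))) : Continuous ((b i).coord j) :=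
    LinearMap.continuous_of_finiteDimensional _
  rw [hexpand]
  fun_prop

namespace ContinuousMultilinearMap

section Diagonal

variable {𝕜 E F : Type*} [NontriviallyNormedField 𝕜] [NormedAddCommGroup E] [NormedSpace 𝕜 E]
  [NormedAddCommGroup F] [NormedSpace 𝕜 F]

theorem apply_update_const_eq_of_symm {ι : Type*} [Fintype ι] [DecidableEq ι]
    {g : ContinuousMultilinearMap 𝕜 (fun _ : ι => E) F}
    (hg : ∀ v (σ : Equiv.Perm ι), g (v ∘ σ) = g v) (y u : E) (i j : ι) :
    g (update (fun _ => y) i u) = g (update (fun _ => y) j u) := by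
  rw [← hg _ (Equiv.swap i j), update_comp_equiv, Equiv.symm_swap, Equiv.swap_apply_left]
  rfl

variable {k : ℕ} {g : ContinuousMultilinearMap 𝕜 (fun _ : Fin (k + 1) => E) F}

theorem curryRight_comp_perm_of_symm (hg : ∀ v (σ : Equiv.Perm (Fin (k + 1))), g (v ∘ σ) = g v)
    (v : Fin k → E) (σ : Equiv.Perm (Fin k)) : g.curryRight (v ∘ σ) = g.curryRight v := by
  ext u
  -- the permutation acting as `σ` on the first `k` slots and fixing the last one
  rw [curryRight_apply, curryRight_apply,
    ← hg (Fin.snoc v u) (finSuccEquivLast.symm.permCongr σ.optionCongr)]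
  congr 1
  ext j
  induction j using Fin.lastCases <;> simp [Equiv.permCongr_apply]

theorem hasFDerivAt_apply_const_of_symm
    (hg : ∀ v (σ : Equiv.Perm (Fin (k + 1))), g (v ∘ σ) = g v) (y : E) :
    HasFDerivAt (fun z => g fun _ => z) ((k + 1 : 𝕜) • g.curryRight fun _ => y) y := by
  have hdiag : HasFDerivAt (fun z : E => fun _ : Fin (k + 1) => z)
      (ContinuousLinearMap.pi fun _ => ContinuousLinearMap.id 𝕜 E) y :=
    (ContinuousLinearMap.pi fun _ => ContinuousLinearMap.id 𝕜 E).hasFDerivAt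
  have hsnoc (u : E) :
      Fin.snoc (fun _ => y) u = update (fun _ : Fin (k + 1) => y) (Fin.last k) u := by
    ext j
    induction j using Fin.lastCases <;> simp
  refine ((g.hasFDerivAt _).comp y hdiag).congr_fderiv ?_
  ext u
  simp [linearDeriv_apply, apply_update_const_eq_of_symm hg y u _ (Fin.last k), hsnoc,
    ← Nat.cast_smul_eq_nsmul 𝕜]

end Diagonal

end ContinuousMultilinearMap

theorem iteratedFDeriv_two_const_mul_sqrt_apply {E : Type*} [NormedAddCommGroup E]
    [NormedSpace ℝ E] {d : E → ℝ} {D : E → StrongDual ℝ E} {D₂ : E →L[ℝ] StrongDual ℝ E} {x : E}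
    (hd : ∀ᶠ y in 𝓝 x, HasFDerivAt d (D y) y) (hD : HasFDerivAt D D₂ x) (hx : 0 < d x)
    (c : ℝ) (h k : E) :
    iteratedFDeriv ℝ 2 (fun y => c * √(d y)) x ![h, k] =
      c * (D₂ h k / (2 * √(d x)) - D x h * D x k / (4 * √(d x) ^ 3)) := by
  have hdx : HasFDerivAt d (D x) x := hd.self_of_nhds
  have hfderiv :
      fderiv ℝ (fun y => c * √(d y)) =ᶠ[𝓝 x] fun y => (c * (2 * √(d y))⁻¹) • D y := by
    filter_upwards [hd, hdx.continuousAt.eventually (lt_mem_nhds hx)] with y hy hy₀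
    rw [((hy.sqrt hy₀.ne').const_mul c).fderiv, smul_smul, one_div]
  have hsqrt : 0 < √(d x) := Real.sqrt_pos.mpr hx
  have hinv : HasFDerivAt (fun y => c * (2 * √(d y))⁻¹) _ x :=
    ((hasDerivAt_inv (by positivity)).comp_hasFDerivAt x ((hdx.sqrt hx.ne').const_mul 2)).const_mul c
  rw [iteratedFDeriv_two_apply, hfderiv.fderiv_eq, (hinv.fun_smul hD).fderiv]
  simp only [Matrix.cons_val_zero, Matrix.cons_val_one, Matrix.cons_val_fin_one, add_apply,
    smul_apply, neg_apply, ContinuousLinearMap.smulRight_apply, neg_smul, smul_eq_mul]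
  field_simp
  ring

theorem div_sqrt_le_three_mul_div_sqrt_sub {a b c : ℝ} (ha : 0 < a) (hb : b ^ 2 ≤ a * c) :
    c / √a ≤ 3 * c / √a - 2 * b ^ 2 / √a ^ 3 := by
  have hr : 0 < √a := Real.sqrt_pos.2 ha
  have hexpand : 3 * c / √a - 2 * b ^ 2 / √a ^ 3 - c / √a = 2 * (a * c - b ^ 2) / √a ^ 3 := by
    field_simp
    rw [Real.sq_sqrt ha.le]
    ring
  have := sub_nonneg.2 hb
  rw [← sub_nonneg, hexpand]
  positivity

namespace ContinuousMultilinearMap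

section Quartic

variable {E : Type*} [NormedAddCommGroup E] [NormedSpace ℝ E]
  {f : ContinuousMultilinearMap ℝ (fun _ : Fin 4 => E) ℝ}

theorem apply_const_fin_four (x : E) : f (fun _ => x) = f ![x, x, x, x] := by
  congr 1
  ext i
  fin_cases i <;> rfl

theorem curryRight_const_apply_fin_four (x h : E) :
    f.curryRight (fun _ => x) h = f ![x, x, x, h] := by
  rw [curryRight_apply]
  congr 1
  ext i
  fin_cases i <;> rfl

theorem curryRight_curryRight_const_apply_fin_four (x h u : E) :
    f.curryRight.curryRight (fun _ => x) h u = f ![x, x, h, u] := by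
  rw [curryRight_apply, curryRight_apply]
  congr 1
  ext i
  fin_cases i <;> rfl

variable (hf : ∀ v (σ : Equiv.Perm (Fin 4)), f (v ∘ σ) = f v)
include hf

theorem iteratedFDeriv_two_half_sqrt_apply_vec {x : E} (hx : 0 < f ![x, x, x, x]) (h : E) :
    iteratedFDeriv ℝ 2 (fun y => 1 / 2 * √(f ![y, y, y, y])) x ![h, h] =
      3 * f ![x, x, h, h] / √(f ![x, x, x, x]) -
        2 * f ![x, x, x, h] ^ 2 / √(f ![x, x, x, x]) ^ 3 := by
  have hd (y : E) :
      HasFDerivAt (fun z => f ![z, z, z, z]) ((4 : ℝ) • f.curryRight fun _ => y) y := by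
    simpa [apply_const_fin_four, show (3 + 1 : ℝ) = 4 by norm_num] using
      hasFDerivAt_apply_const_of_symm hf y
  have hD : HasFDerivAt (fun y => (4 : ℝ) • f.curryRight fun _ => y)
      ((4 : ℝ) • ((2 + 1 : ℝ) • f.curryRight.curryRight fun _ => x)) x :=
    (hasFDerivAt_apply_const_of_symm (curryRight_comp_perm_of_symm hf) x).const_smul (4 : ℝ)
  rw [iteratedFDeriv_two_const_mul_sqrt_apply (.of_forall hd) hD hx]
  simp only [_root_.smul_apply, smul_eq_mul, curryRight_const_apply_fin_four,
    curryRight_curryRight_const_apply_fin_four]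
  have : 0 < √(f ![x, x, x, x]) := Real.sqrt_pos.2 hx
  field_simp
  ring

theorem sq_apply_le_mul_apply_of_symm {x : E} (hpos : ∀ u, 0 ≤ f ![x, x, u, u]) (h : E) :
    f ![x, x, x, h] ^ 2 ≤ f ![x, x, x, x] * f ![x, x, h, h] := by
  have hswap : f ![x, x, h, x] = f ![x, x, x, h] := by
    rw [← hf _ (Equiv.swap 2 3)]
    congr 1
    ext i
    fin_cases i <;> rfl
  have := LinearMap.BilinForm.apply_mul_apply_le_of_forall_zero_le
    (f.curryRight.curryRight fun _ => x).toLinearMap₁₂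
    (by simpa only [ContinuousLinearMap.toLinearMap₁₂_apply_apply_apply,
      curryRight_curryRight_const_apply_fin_four] using hpos) x h
  simpa only [ContinuousLinearMap.toLinearMap₁₂_apply_apply_apply,
    curryRight_curryRight_const_apply_fin_four, hswap, sq] using this

end Quartic

end ContinuousMultilinearMap

open ContinuousMultilinearMap in
/-- For a positive definite, biquadratically nonnegative symmetric 4-linear form `f₄`,
the function `Q(x) = (1/2)(f₄[x]⁴)^{1/2}` satisfies
`∇²Q(x)[h,h] ≥ d(x)^{-1/2} f₄[x,x,h,h]` for every `x ≠ 0` and every `h`. -/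
theorem quartic_norm_sq_hessian_lower {n : ℕ}
    (f4 : MultilinearMap ℝ (fun _ : Fin 4 => EuclideanSpace ℝ (Fin n)) ℝ)
    (hsymm : ∀ (v : Fin 4 → EuclideanSpace ℝ (Fin n)) (σ : Equiv.Perm (Fin 4)),
      f4 (v ∘ σ) = f4 v)
    (hpos : ∀ x y : EuclideanSpace ℝ (Fin n), 0 ≤ f4 ![x, x, y, y])
    (hpd : ∀ x : EuclideanSpace ℝ (Fin n), x ≠ 0 → 0 < f4 ![x, x, x, x])
    (Q : EuclideanSpace ℝ (Fin n) → ℝ)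
    (hQ : ∀ x, Q x = (1 / 2) * Real.sqrt (f4 ![x, x, x, x])) :
    ∀ x : EuclideanSpace ℝ (Fin n), x ≠ 0 → ∀ h : EuclideanSpace ℝ (Fin n),
      iteratedFDeriv ℝ 2 Q x ![h, h] ≥ f4 ![x, x, h, h] / Real.sqrt (f4 ![x, x, x, x]) := by
  intro x hx h
  let F : ContinuousMultilinearMap ℝ (fun _ : Fin 4 => EuclideanSpace ℝ (Fin n)) ℝ :=
    ⟨f4, f4.continuous_of_finiteDimensional⟩
  have hd : 0 < F ![x, x, x, x] := hpd x hx
  have hcs : F ![x, x, x, h] ^ 2 ≤ F ![x, x, x, x] * F ![x, x, h, h] :=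
    sq_apply_le_mul_apply_of_symm hsymm (hpos x) h
  rw [show Q = fun y => 1 / 2 * √(F ![y, y, y, y]) from funext hQ,
    iteratedFDeriv_two_half_sqrt_apply_vec hsymm hd]
  exact div_sqrt_le_three_mul_div_sqrt_sub hd hcs
end

section
/- Let f: ℝⁿ → ℝ be a convex quartic polynomial with leading form f₄ and norm ‖u‖_f = (f₄[u]⁴)^{1/4} (assume f₄ positive definite). Then for all x, y and all τ > 0: f(y) − f(x) − ⟨∇f(x), y−x⟩ − (1/2)∇²f(x)[y−x, y−x] ≤ (1/(6τ)) ∇²f(x)[y−x,y−x] + (1+2τ) ‖y−x‖_f⁴. -/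
/-!
On the line `t ↦ x + t • (y - x)` the function `f` restricts to the quartic
`g(t) = g(0) + g'(0) t + g''(0) t² / 2 + g'''(0) t³ / 6 + ‖y - x‖_f⁴ t⁴`, whose Taylor expansion is
exact because `g⁗` is constant. Convexity of `g` gives
`0 ≤ g''(-τ) = g''(0) - τ g'''(0) + 12 τ² ‖y - x‖_f⁴`, and dividing by `6τ` bounds the cubic term
`g'''(0) / 6` of `g(1)` by `g''(0) / (6τ) + 2τ ‖y - x‖_f⁴`.
-/

open Finset Nat in
theorem eq_taylor_sum_of_hasDerivAt_chain {m : ℕ} {D : ℕ → ℝ → ℝ}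
    (hD : ∀ k < m, ∀ t, HasDerivAt (D k) (D (k + 1) t) t) (hm : ∀ t, D m t = D m 0) (t : ℝ) :
    D 0 t = ∑ k ∈ range (m + 1), D k 0 * t ^ k / (k ! : ℝ) := by
  induction m generalizing D t with
  | zero => simp [hm t]
  | succ m ih =>
    set P : ℝ → ℝ := fun s => ∑ k ∈ range (m + 2), D k 0 * s ^ k / (k ! : ℝ)
    have hD1 (s : ℝ) : D 1 s = ∑ k ∈ range (m + 1), D (k + 1) 0 * s ^ k / (k ! : ℝ) :=
      ih (D := fun k => D (k + 1)) (fun k hk => hD (k + 1) (by omega)) hm s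
    have hP (s : ℝ) : HasDerivAt P (D 1 s) s := by
      refine (HasDerivAt.fun_sum fun k _ =>
        ((hasDerivAt_pow k s).const_mul (D k 0)).div_const (k ! : ℝ)).congr_deriv ?_
      rw [hD1, sum_range_succ' _ (m + 1)]
      simp only [CharP.cast_eq_zero, zero_mul, mul_zero, zero_div, add_zero, factorial_succ,
        cast_mul, add_tsub_cancel_right]
      refine sum_congr rfl fun k _ => ?_
      field_simp
    have hP0 : P 0 = D 0 0 := by simp [P, sum_range_succ']
    have hdiff (s : ℝ) : HasDerivAt (fun s => D 0 s - P s) 0 s := by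
      simpa only [sub_self] using (hD 0 (by omega) s).fun_sub (hP s)
    have hconst := is_const_of_deriv_eq_zero (fun s => (hdiff s).differentiableAt)
      (fun s => (hdiff s).deriv) t 0
    simpa only [hP0, sub_self, sub_eq_zero] using hconst

theorem hasDerivAt_iteratedFDeriv_line {E F : Type*} [NormedAddCommGroup E] [NormedSpace ℝ E]
    [NormedAddCommGroup F] [NormedSpace ℝ F] {f : E → F} {n : WithTop ℕ∞} (hf : ContDiff ℝ n f)
    {k : ℕ} (hk : k < n) (x h : E) (t : ℝ) :
    HasDerivAt (fun s : ℝ => iteratedFDeriv ℝ k f (x + s • h) (fun _ => h))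
      (iteratedFDeriv ℝ (k + 1) f (x + t • h) (fun _ => h)) t := by
  have hline : HasDerivAt (fun s : ℝ => x + s • h) h t := by
    simpa using ((hasDerivAt_id t).smul_const h).const_add x
  have hDk := (hf.differentiable_iteratedFDeriv hk (x + t • h)).hasFDerivAt.comp_hasDerivAt t hline
  refine ((ContinuousMultilinearMap.apply ℝ (fun _ : Fin k => E) F
    (fun _ => h)).hasFDerivAt.comp_hasDerivAt t hDk).congr_deriv ?_
  rw [iteratedFDeriv_succ_apply_left]
  rfl

theorem ConvexOn.comp_line {E β : Type*} [AddCommGroup E] [Module ℝ E]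
    [AddCommMonoid β] [PartialOrder β] [Module ℝ β] {f : E → β} (hf : ConvexOn ℝ Set.univ f)
    (x h : E) : ConvexOn ℝ Set.univ fun t : ℝ => f (x + t • h) := by
  have hline : (fun t : ℝ => f (x + t • h)) = f ∘ AffineMap.lineMap x (x + h) := by
    ext t
    simp [AffineMap.lineMap_apply_module', add_comm]
  exact hline ▸ hf.comp_affineMap (AffineMap.lineMap x (x + h))

theorem ConvexOn.deriv2_nonneg_of_hasDerivAt {g g' g'' : ℝ → ℝ} (hg : ConvexOn ℝ Set.univ g)
    (hg' : ∀ t, HasDerivAt g (g' t) t) (hg'' : ∀ t, HasDerivAt g' (g'' t) t) (t : ℝ) :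
    0 ≤ g'' t := by
  have hderiv : deriv g = g' := funext fun t => (hg' t).deriv
  have hmono : Monotone g' := by
    simpa [hderiv] using hg.monotoneOn_deriv fun t _ => (hg' t).differentiableAt
  simpa [(hg'' t).deriv] using hmono.deriv_nonneg (x := t)

theorem quartic_upper_approx_general {n : ℕ}
    (f : EuclideanSpace ℝ (Fin n) → ℝ)
    (f4 : MultilinearMap ℝ (fun _ : Fin 4 => EuclideanSpace ℝ (Fin n)) ℝ)
    (hf : ContDiff ℝ 4 f)
    (hconv : ConvexOn ℝ Set.univ f)
    (hD4 : ∀ (x : EuclideanSpace ℝ (Fin n)) (v : Fin 4 → EuclideanSpace ℝ (Fin n)),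
      iteratedFDeriv ℝ 4 f x v = 24 * f4 v)
    (x y : EuclideanSpace ℝ (Fin n)) (τ : ℝ) (hτ : 0 < τ) :
    f y - f x - fderiv ℝ f x (y - x)
        - (1 / 2) * iteratedFDeriv ℝ 2 f x ![y - x, y - x]
      ≤ (1 / (6 * τ)) * iteratedFDeriv ℝ 2 f x ![y - x, y - x]
        + (1 + 2 * τ) * f4 ![y - x, y - x, y - x, y - x] := by
  set h := y - x
  set G : ℕ → ℝ → ℝ := fun k t => iteratedFDeriv ℝ k f (x + t • h) (fun _ => h)
  have hG (k : ℕ) (hk : k < 4) (t : ℝ) : HasDerivAt (G k) (G (k + 1) t) t :=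
    hasDerivAt_iteratedFDeriv_line hf (mod_cast hk) x h t
  have hG4 (t : ℝ) : G 4 t = G 4 0 := by simp only [G, hD4]
  have hG0_taylor : G 0 1 = G 0 0 + G 1 0 + G 2 0 / 2 + G 3 0 / 6 + G 4 0 / 24 := by
    rw [eq_taylor_sum_of_hasDerivAt_chain hG hG4 1]
    simp [Finset.sum_range_succ, Nat.factorial]
  have hG2_taylor : G 2 (-τ) = G 2 0 - G 3 0 * τ + G 4 0 * τ ^ 2 / 2 := by
    rw [eq_taylor_sum_of_hasDerivAt_chain (D := fun k => G (k + 2))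
      (fun k hk => hG (k + 2) (by omega)) hG4 (-τ)]
    simp [Finset.sum_range_succ, Nat.factorial, sub_eq_add_neg]
  have hconvex : 0 ≤ G 2 (-τ) :=
    (hconv.comp_line x h).deriv2_nonneg_of_hasDerivAt (g' := G 1)
      (fun t => by simpa [G] using hG 0 (by norm_num) t) (hG 1 (by norm_num)) (-τ)
  have hfy : f y = G 0 1 := by simp [G, h]
  have hfx : G 0 0 = f x := by simp [G]
  have hDf : G 1 0 = fderiv ℝ f x h := by simp [G, iteratedFDeriv_one_apply]
  have hD2f : G 2 0 = iteratedFDeriv ℝ 2 f x ![h, h] := by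
    simp [G, Matrix.vec_single_eq_const, Matrix.vecCons_const]
  have hf4 : f4 ![h, h, h, h] = G 4 0 / 24 := by
    simp [G, hD4, Matrix.vec_single_eq_const, Matrix.vecCons_const]
  rw [hfy, hG0_taylor, hfx, hDf, ← hD2f, hf4, ← sub_nonneg]
  have hslack : 0 ≤ (G 2 0 - G 3 0 * τ + G 4 0 * τ ^ 2 / 2) / (6 * τ) :=
    div_nonneg (by linarith) (by positivity)
  convert hslack using 1
  field_simp
  ring

/-- Upper second-order bound for a convex quartic polynomial `f` with positive definite
leading form `f₄`: for all `x, y` and `τ > 0`,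
`f(y) − f(x) − ⟨∇f(x),y−x⟩ − (1/2)∇²f(x)[y−x]² ≤ (1/(6τ))∇²f(x)[y−x]² + (1+2τ)‖y−x‖_f⁴`. -/
theorem quartic_upper_approx {n : ℕ}
    (f : EuclideanSpace ℝ (Fin n) → ℝ)
    (f4 : MultilinearMap ℝ (fun _ : Fin 4 => EuclideanSpace ℝ (Fin n)) ℝ)
    (hsymm : ∀ (v : Fin 4 → EuclideanSpace ℝ (Fin n)) (σ : Equiv.Perm (Fin 4)),
      f4 (v ∘ σ) = f4 v)
    (hf : ContDiff ℝ 4 f)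
    (hconv : ConvexOn ℝ Set.univ f)
    (hD4 : ∀ (x : EuclideanSpace ℝ (Fin n)) (v : Fin 4 → EuclideanSpace ℝ (Fin n)),
      iteratedFDeriv ℝ 4 f x v = 24 * f4 v)
    (hpd : ∀ u : EuclideanSpace ℝ (Fin n), u ≠ 0 → 0 < f4 ![u, u, u, u])
    (x y : EuclideanSpace ℝ (Fin n)) (τ : ℝ) (hτ : 0 < τ) :
    f y - f x - fderiv ℝ f x (y - x)
        - (1 / 2) * iteratedFDeriv ℝ 2 f x ![y - x, y - x]
      ≤ (1 / (6 * τ)) * iteratedFDeriv ℝ 2 f x ![y - x, y - x]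
        + (1 + 2 * τ) * f4 ![y - x, y - x, y - x, y - x] :=
  quartic_upper_approx_general f f4 hf hconv hD4 x y τ hτ
end

section
/- Let f be Q-regular with parameters 0 ≤ μ ≤ L (i.e., μ‖h‖⁴ ≤ D⁴f(z)[h]⁴ ≤ L‖h‖⁴ on the relevant set), convex, and C⁴. Then for all x, y and all γ ∈ [1/3, 1/2]: f(y) ≥ f(x) + ⟨∇f(x), y−x⟩ + ((3γ−1)/(6γ)) ∇²f(x)[y−x,y−x] + (μ/24)‖y−x‖⁴ [ (1−2γ) − (16/125)(L/μ − 1)((3γ−1)/γ)³ ]. -/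
/-!
Restrict `f` to the segment: `g t = f (x + t • (y - x))`. Taylor's formula with integral remainder
to order three at `0`, combined with the first-order formula for `g''` on `[0, γ]` to eliminate
`g'''(0)`, gives
`g 1 = g 0 + g' 0 + (3γ - 1)/(6γ) g'' 0 + g'' γ / (6γ) + ∫₀¹ K g⁗`
with `K t = (1 - t)³/6 - 𝟙[t < γ] (γ - t)/(6γ)`. Convexity gives `g'' γ ≥ 0`. On `[0, γ]` the
kernel factors as `t (t - s) (3 - s - t) / 6`, where `s ∈ [0, 1/2]` solves `γ (3 - 3s + s²) = 1`,
so `K ≤ 0` exactly on `[0, s]`. Bounding `g⁗` by `L‖y - x‖⁴` there and by `μ‖y - x‖⁴` elsewhere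
leaves `μ‖y - x‖⁴ ∫K + (L - μ)‖y - x‖⁴ ∫₀ˢ K`, where `∫K = (1 - 2γ)/24` and
`∫₀ˢ K ≥ -s³/12 ≥ -(2/375)(3s - s²)³` because `3s - s² ≥ 5s/2`; note `3s - s² = (3γ - 1)/γ`.
-/

open Set intervalIntegral

open scoped Nat in
theorem taylor_integral_remainder_of_contDiff {g : ℝ → ℝ} {n : ℕ} (hg : ContDiff ℝ (n + 1) g)
    (a b : ℝ) :
    g b = ∑ k ∈ Finset.range (n + 1), (b - a) ^ k / k ! * iteratedDeriv k g a
      + ∫ t in a..b, (b - t) ^ n / n ! * iteratedDeriv (n + 1) g t := by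
  rcases eq_or_ne a b with rfl | hab
  · simp [Finset.sum_range_succ']
  have hwithin : ∀ k ≤ n + 1, ∀ t ∈ uIcc a b,
      iteratedDerivWithin k g (uIcc a b) t = iteratedDeriv k g t := fun k hk t ht =>
    iteratedDerivWithin_eq_iteratedDeriv (uniqueDiffOn_uIcc hab)
      (hg.contDiffAt.of_le (by exact_mod_cast hk)) ht
  have h := taylor_integral_remainder (x₀ := a) (x := b) (hg.contDiffOn (s := uIcc a b))
  rw [taylor_within_apply, integral_congr
    (g := fun t => (b - t) ^ n / n ! * iteratedDeriv (n + 1) g t)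
    (fun t ht => by simp only [smul_eq_mul, hwithin (n + 1) le_rfl t ht]),
    Finset.sum_congr rfl (g := fun k => (b - a) ^ k / k ! * iteratedDeriv k g a)
    (fun k hk => by
      rw [hwithin k (by have := Finset.mem_range.1 hk; omega) a left_mem_uIcc,
        smul_eq_mul, div_eq_inv_mul, mul_assoc])] at h
  linarith

theorem iteratedDeriv_iteratedDeriv {𝕜 F : Type*} [NontriviallyNormedField 𝕜]
    [NormedAddCommGroup F] [NormedSpace 𝕜 F] {g : 𝕜 → F} (k l : ℕ) :
    iteratedDeriv k (iteratedDeriv l g) = iteratedDeriv (k + l) g := by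
  simp only [iteratedDeriv_eq_iterate, Function.iterate_add_apply]

theorem iteratedDeriv_comp_add_smul {E F : Type*} [NormedAddCommGroup E] [NormedSpace ℝ E]
    [NormedAddCommGroup F] [NormedSpace ℝ F] {N : WithTop ℕ∞} {f : E → F}
    (hf : ContDiff ℝ N f) (x h : E) {k : ℕ} (hk : k ≤ N) (t : ℝ) :
    iteratedDeriv k (fun s : ℝ => f (x + s • h)) t
      = iteratedFDeriv ℝ k f (x + t • h) (fun _ => h) := by
  have hcomp : (fun s : ℝ => f (x + s • h)) =
      (fun z => f (x + z)) ∘ ContinuousLinearMap.smulRight (1 : ℝ →L[ℝ] ℝ) h := by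
    funext s; simp
  have hshift : ContDiff ℝ N (fun z => f (x + z)) := hf.comp (contDiff_const.add contDiff_id)
  rw [iteratedDeriv_eq_iteratedFDeriv, hcomp,
    ContinuousLinearMap.iteratedFDeriv_comp_right _ hshift _ hk,
    ContinuousMultilinearMap.compContinuousLinearMap_apply, iteratedFDeriv_comp_add_left]
  simp

theorem ConvexOn.iteratedDeriv_two_nonneg {g : ℝ → ℝ} (hconv : ConvexOn ℝ univ g)
    (hg : ContDiff ℝ 2 g) (t : ℝ) : 0 ≤ iteratedDeriv 2 g t := by
  have hmono : Monotone (deriv g) := by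
    simpa using hconv.monotoneOn_deriv
      (fun x _ => (hg.differentiable (by norm_num)).differentiableAt)
  rw [iteratedDeriv_succ, iteratedDeriv_one]
  exact hmono.deriv_nonneg

theorem mul_integral_le_integral_mul_of_nonneg {w φ : ℝ → ℝ} {a b m : ℝ} (hab : a ≤ b)
    (hw : Continuous w) (hφ : Continuous φ) (hw0 : ∀ t ∈ Icc a b, 0 ≤ w t)
    (hm : ∀ t ∈ Icc a b, m ≤ φ t) : m * ∫ t in a..b, w t ≤ ∫ t in a..b, w t * φ t := by
  rw [← integral_const_mul]
  refine integral_mono_on hab ((continuous_const.mul hw).intervalIntegrable _ _)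
    ((hw.mul hφ).intervalIntegrable _ _) fun t ht => ?_
  rw [mul_comm]
  exact mul_le_mul_of_nonneg_left (hm t ht) (hw0 t ht)

theorem mul_integral_le_integral_mul_of_nonpos {w φ : ℝ → ℝ} {a b M : ℝ} (hab : a ≤ b)
    (hw : Continuous w) (hφ : Continuous φ) (hw0 : ∀ t ∈ Icc a b, w t ≤ 0)
    (hM : ∀ t ∈ Icc a b, φ t ≤ M) : M * ∫ t in a..b, w t ≤ ∫ t in a..b, w t * φ t := by
  rw [← integral_const_mul]
  refine integral_mono_on hab ((continuous_const.mul hw).intervalIntegrable _ _)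
    ((hw.mul hφ).intervalIntegrable _ _) fun t ht => ?_
  rw [mul_comm]
  exact mul_le_mul_of_nonpos_left (hM t ht) (hw0 t ht)

theorem exists_le_mul_quadratic_eq_one {γ : ℝ} (hγ : γ ∈ Icc (1 / 3 : ℝ) (1 / 2)) :
    ∃ s ∈ Icc (0 : ℝ) (1 / 2), s ≤ γ ∧ γ * (3 - 3 * s + s ^ 2) = 1 := by
  obtain ⟨hγ1, hγ2⟩ := hγ
  obtain ⟨s, hs, hroot⟩ := intermediate_value_Icc' (by norm_num : (0 : ℝ) ≤ 1 / 2)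
    (by fun_prop : Continuous fun s : ℝ => γ * (3 - 3 * s + s ^ 2)).continuousOn
    (⟨by norm_num; linarith, by norm_num; linarith⟩ : (1 : ℝ) ∈ Icc _ _)
  beta_reduce at hroot
  refine ⟨s, hs, ?_, hroot⟩
  have hprod : γ * ((γ - s) * (3 - γ - s)) = (1 - γ) ^ 3 := by linear_combination hroot
  by_contra! hlt
  have : γ * ((γ - s) * (3 - γ - s)) < 0 :=
    mul_neg_of_pos_of_neg (by linarith)
      (mul_neg_of_neg_of_pos (by linarith) (by linarith [hs.2]))
  linarith [pow_nonneg (by linarith : (0 : ℝ) ≤ 1 - γ) 3]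

noncomputable def remainderKernel (s t : ℝ) : ℝ := t * (t - s) * (3 - s - t) / 6

theorem continuous_remainderKernel (s : ℝ) : Continuous (remainderKernel s) := by
  unfold remainderKernel; fun_prop

theorem remainderKernel_eq {γ s : ℝ} (hroot : γ * (3 - 3 * s + s ^ 2) = 1) (t : ℝ) :
    remainderKernel s t = (1 - t) ^ 3 / 6 - (γ - t) / (6 * γ) := by
  have hγ : γ ≠ 0 := left_ne_zero_of_mul_eq_one hroot
  unfold remainderKernel
  field_simp
  linear_combination t * hroot

theorem remainderKernel_nonpos {s t : ℝ} (hs : s ≤ 3 / 2) (ht : t ∈ Icc 0 s) :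
    remainderKernel s t ≤ 0 := by
  obtain ⟨ht0, hts⟩ := ht
  have : t * (t - s) * (3 - s - t) ≤ 0 :=
    mul_nonpos_of_nonpos_of_nonneg (mul_nonpos_of_nonneg_of_nonpos ht0 (by linarith))
      (by linarith)
  unfold remainderKernel
  linarith

theorem remainderKernel_nonneg {s t : ℝ} (hs : 0 ≤ s) (hst : s ≤ t) (h3 : s + t ≤ 3) :
    0 ≤ remainderKernel s t := by
  have : 0 ≤ t * (t - s) * (3 - s - t) :=
    mul_nonneg (mul_nonneg (by linarith) (by linarith)) (by linarith)
  unfold remainderKernel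
  linarith

theorem integral_remainderKernel (s a b : ℝ) : ∫ t in a..b, remainderKernel s t =
    (b ^ 3 - b ^ 4 / 4 - (3 * s - s ^ 2) * b ^ 2 / 2) / 6
      - (a ^ 3 - a ^ 4 / 4 - (3 * s - s ^ 2) * a ^ 2 / 2) / 6 := by
  refine integral_eq_sub_of_hasDerivAt
    (f := fun u => (u ^ 3 - u ^ 4 / 4 - (3 * s - s ^ 2) * u ^ 2 / 2) / 6)
    (fun t _ => ?_) ((continuous_remainderKernel s).intervalIntegrable _ _)
  refine HasDerivAt.congr_deriv ((((hasDerivAt_pow 3 t).sub ((hasDerivAt_pow 4 t).div_const 4)).sub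
    (((hasDerivAt_pow 2 t).const_mul (3 * s - s ^ 2)).div_const 2)).div_const 6) ?_
  norm_num [remainderKernel]
  ring

theorem neg_cube_le_integral_remainderKernel {s : ℝ} (hs : s ∈ Icc (0 : ℝ) (1 / 2)) :
    -(2 / 375) * (3 * s - s ^ 2) ^ 3 ≤ ∫ t in (0 : ℝ)..s, remainderKernel s t := by
  obtain ⟨hs0, hs1⟩ := hs
  have hδ : 5 / 2 * s ≤ 3 * s - s ^ 2 := by nlinarith
  have hcube : (5 / 2 * s) ^ 3 ≤ (3 * s - s ^ 2) ^ 3 := by gcongr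
  rw [integral_remainderKernel]
  nlinarith [pow_nonneg hs0 4]

theorem remainder_eq_integral_remainderKernel {φ : ℝ → ℝ} (hφ : Continuous φ) {γ s : ℝ}
    (hroot : γ * (3 - 3 * s + s ^ 2) = 1) :
    (∫ t in (0 : ℝ)..1, (1 - t) ^ 3 / 6 * φ t) - 1 / (6 * γ) * ∫ t in (0 : ℝ)..γ, (γ - t) * φ t
      = (∫ t in (0 : ℝ)..γ, remainderKernel s t * φ t)
        + ∫ t in γ..1, (1 - t) ^ 3 / 6 * φ t := by
  have hcφ : Continuous fun t => (1 - t) ^ 3 / 6 * φ t := by fun_prop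
  rw [← integral_add_adjacent_intervals (hcφ.intervalIntegrable 0 γ)
    (hcφ.intervalIntegrable γ 1), ← integral_const_mul, add_sub_right_comm,
    ← integral_sub (hcφ.intervalIntegrable _ _)
      ((by fun_prop : Continuous fun t => 1 / (6 * γ) * ((γ - t) * φ t)).intervalIntegrable _ _)]
  congr 1
  refine integral_congr fun t _ => ?_
  simp only [remainderKernel_eq hroot t]
  ring

theorem remainder_lower_bound {φ : ℝ → ℝ} (hφ : Continuous φ) {m M γ : ℝ}
    (hm : ∀ t ∈ Icc (0 : ℝ) 1, m ≤ φ t) (hM : ∀ t ∈ Icc (0 : ℝ) 1, φ t ≤ M)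
    (hγ : γ ∈ Icc (1 / 3 : ℝ) (1 / 2)) :
    m * (1 - 2 * γ) / 24 - (M - m) * (2 / 375) * ((3 * γ - 1) / γ) ^ 3 ≤
      (∫ t in (0 : ℝ)..1, (1 - t) ^ 3 / 6 * φ t)
        - 1 / (6 * γ) * ∫ t in (0 : ℝ)..γ, (γ - t) * φ t := by
  obtain ⟨s, ⟨hs0, hs1⟩, hsγ, hroot⟩ := exists_le_mul_quadratic_eq_one hγ
  obtain ⟨hγ1, hγ2⟩ := hγ
  have hδ : (3 * γ - 1) / γ = 3 * s - s ^ 2 := by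
    field_simp [left_ne_zero_of_mul_eq_one hroot]
    linear_combination hroot
  have hK := continuous_remainderKernel s
  have hKφ : Continuous fun t => remainderKernel s t * φ t := by fun_prop
  have hneg := mul_integral_le_integral_mul_of_nonpos hs0 hK hφ
    (fun t ht => remainderKernel_nonpos (by linarith) ht)
    (fun t ht => hM t ⟨ht.1, by linarith [ht.2]⟩)
  have hpos := mul_integral_le_integral_mul_of_nonneg hsγ hK hφ
    (fun t ht => remainderKernel_nonneg hs0 ht.1 (by linarith [ht.2]))
    (fun t ht => hm t ⟨by linarith [ht.1], by linarith [ht.2]⟩)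
  have htail := mul_integral_le_integral_mul_of_nonneg (a := γ) (b := 1) (by linarith)
    (by fun_prop : Continuous fun t : ℝ => (1 - t) ^ 3 / 6) hφ
    (fun t ht => div_nonneg (pow_nonneg (by linarith [ht.2]) 3) (by norm_num))
    (fun t ht => hm t ⟨by linarith [ht.1], ht.2⟩)
  have htail_mass : ∫ t in γ..1, (1 - t) ^ 3 / 6 = (1 - γ) ^ 4 / 24 := by
    simp [integral_div, integral_comp_sub_left (fun t => t ^ 3)]
    ring
  have hcut := mul_le_mul_of_nonneg_left (neg_cube_le_integral_remainderKernel ⟨hs0, hs1⟩)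
    (sub_nonneg.2 ((hm 0 ⟨le_rfl, zero_le_one⟩).trans (hM 0 ⟨le_rfl, zero_le_one⟩)))
  rw [remainder_eq_integral_remainderKernel hφ hroot, hδ,
    ← integral_add_adjacent_intervals (hKφ.intervalIntegrable 0 s) (hKφ.intervalIntegrable s γ)]
  rw [htail_mass] at htail
  rw [integral_remainderKernel] at hneg hpos hcut
  linear_combination hneg + hpos + htail + hcut - (m * γ / 12) * hroot

theorem ConvexOn.quartic_taylor_lower_bound {g : ℝ → ℝ} (hg : ContDiff ℝ 4 g)
    (hconv : ConvexOn ℝ univ g) {m M γ : ℝ} (hm : ∀ t ∈ Icc (0 : ℝ) 1, m ≤ iteratedDeriv 4 g t)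
    (hM : ∀ t ∈ Icc (0 : ℝ) 1, iteratedDeriv 4 g t ≤ M) (hγ : γ ∈ Icc (1 / 3 : ℝ) (1 / 2)) :
    g 0 + deriv g 0 + (3 * γ - 1) / (6 * γ) * iteratedDeriv 2 g 0
      + (m * (1 - 2 * γ) / 24 - (M - m) * (2 / 375) * ((3 * γ - 1) / γ) ^ 3) ≤ g 1 := by
  have hγ0 : 0 < γ := by linarith [hγ.1]
  have htaylor3 := taylor_integral_remainder_of_contDiff (n := 3) hg 0 1
  have htaylor1 := taylor_integral_remainder_of_contDiff (n := 1)
    (ContDiff.iterate_deriv' 2 2 hg) 0 γ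
  simp only [← iteratedDeriv_eq_iterate, iteratedDeriv_iteratedDeriv] at htaylor1
  norm_num [Finset.sum_range_succ] at htaylor3 htaylor1
  have hsecond : 0 ≤ iteratedDeriv 2 g γ / (6 * γ) :=
    div_nonneg (hconv.iteratedDeriv_two_nonneg (hg.of_le (by norm_num)) γ) (by positivity)
  have hrem := remainder_lower_bound (hg.continuous_iteratedDeriv 4 le_rfl) hm hM hγ
  set I₃ := ∫ t in (0 : ℝ)..1, (1 - t) ^ 3 / 6 * iteratedDeriv 4 g t
  set I₁ := ∫ t in (0 : ℝ)..γ, (γ - t) * iteratedDeriv 4 g t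
  have hexpand : g 1 = g 0 + deriv g 0 + (3 * γ - 1) / (6 * γ) * iteratedDeriv 2 g 0
      + iteratedDeriv 2 g γ / (6 * γ) + (I₃ - 1 / (6 * γ) * I₁) := by
    rw [htaylor1, htaylor3]
    field_simp
    ring
  linarith

theorem qregular_lower_bound_general {n : ℕ}
    (f : EuclideanSpace ℝ (Fin n) → ℝ) (μ L : ℝ)
    (hμ : 0 < μ)
    (hf : ContDiff ℝ 4 f)
    (hconv : ConvexOn ℝ Set.univ f)
    (hlow : ∀ (z h : EuclideanSpace ℝ (Fin n)),
      μ * ‖h‖ ^ 4 ≤ iteratedFDeriv ℝ 4 f z ![h, h, h, h])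
    (hup : ∀ (z h : EuclideanSpace ℝ (Fin n)),
      iteratedFDeriv ℝ 4 f z ![h, h, h, h] ≤ L * ‖h‖ ^ 4)
    (x y : EuclideanSpace ℝ (Fin n)) (γ : ℝ) (hγ : γ ∈ Set.Icc (1/3 : ℝ) (1/2 : ℝ)) :
    f y ≥ f x + fderiv ℝ f x (y - x)
      + ((3 * γ - 1) / (6 * γ)) * iteratedFDeriv ℝ 2 f x ![y - x, y - x]
      + (μ / 24) * ‖y - x‖ ^ 4
        * ((1 - 2 * γ) - (16 / 125) * (L / μ - 1) * ((3 * γ - 1) / γ) ^ 3) := by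
  set h := y - x
  have hline (k : ℕ) (hk : k ≤ 4) (t : ℝ) :=
    iteratedDeriv_comp_add_smul hf x h (by exact_mod_cast hk) t
  have hvec2 : ![h, h] = fun _ => h := by ext i; fin_cases i <;> rfl
  have hvec4 : ![h, h, h, h] = fun _ => h := by ext i; fin_cases i <;> rfl
  have hlineconv : ConvexOn ℝ univ fun t : ℝ => f (x + t • h) := by
    simpa [Function.comp_def, AffineMap.lineMap_apply, add_comm] using
      hconv.comp_affineMap (AffineMap.lineMap x y)
  have key := hlineconv.quartic_taylor_lower_bound (by fun_prop)
    (m := μ * ‖h‖ ^ 4) (M := L * ‖h‖ ^ 4)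
    (fun t _ => by rw [hline 4 le_rfl, ← hvec4]; exact hlow _ h)
    (fun t _ => by rw [hline 4 le_rfl, ← hvec4]; exact hup _ h) hγ
  rw [← iteratedDeriv_one, hline 1 (by norm_num), hline 2 (by norm_num), ← hvec2] at key
  simp only [zero_smul, add_zero, one_smul, iteratedFDeriv_one_apply] at key
  rw [show x + h = y from add_sub_cancel x y] at key
  have hconst : μ * ‖h‖ ^ 4 * (1 - 2 * γ) / 24
      - (L * ‖h‖ ^ 4 - μ * ‖h‖ ^ 4) * (2 / 375) * ((3 * γ - 1) / γ) ^ 3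
      = (μ / 24) * ‖h‖ ^ 4 * ((1 - 2 * γ) - (16 / 125) * (L / μ - 1) * ((3 * γ - 1) / γ) ^ 3) := by
    field_simp
    ring
  linarith

/-- Lower growth bound for a convex, C⁴, quartic-regular function with parameters
`0 < μ ≤ L`: for all `x, y` and `γ ∈ [1/3, 1/2]`,
`f(y) ≥ f(x) + ⟨∇f(x),y−x⟩ + ((3γ−1)/(6γ))∇²f(x)[y−x]²
  + (μ/24)‖y−x‖⁴[(1−2γ) − (16/125)(L/μ−1)((3γ−1)/γ)³]`. -/
theorem qregular_lower_bound {n : ℕ}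
    (f : EuclideanSpace ℝ (Fin n) → ℝ) (μ L : ℝ)
    (hμ : 0 < μ) (hμL : μ ≤ L)
    (hf : ContDiff ℝ 4 f)
    (hconv : ConvexOn ℝ Set.univ f)
    (hlow : ∀ (z h : EuclideanSpace ℝ (Fin n)),
      μ * ‖h‖ ^ 4 ≤ iteratedFDeriv ℝ 4 f z ![h, h, h, h])
    (hup : ∀ (z h : EuclideanSpace ℝ (Fin n)),
      iteratedFDeriv ℝ 4 f z ![h, h, h, h] ≤ L * ‖h‖ ^ 4)
    (x y : EuclideanSpace ℝ (Fin n)) (γ : ℝ) (hγ : γ ∈ Set.Icc (1/3 : ℝ) (1/2 : ℝ)) :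
    f y ≥ f x + fderiv ℝ f x (y - x)
      + ((3 * γ - 1) / (6 * γ)) * iteratedFDeriv ℝ 2 f x ![y - x, y - x]
      + (μ / 24) * ‖y - x‖ ^ 4
        * ((1 - 2 * γ) - (16 / 125) * (L / μ - 1) * ((3 * γ - 1) / γ) ^ 3) :=
  qregular_lower_bound_general f μ L hμ hf hconv hlow hup x y γ hγ
end
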